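/- Let m ≥ 1 be an integer, μ > 0 real, and P_μ^m(η) = (1−μ)(2−μ)(3/2−μ) + (m+1)μ(1−μ)(13/2−7μ)η + 3(m+1)(m+2)(3/2−2μ)μ²η² + (m+1)(m+2)(m+3)μ³η³. For m ≥ 6, all complex roots of P_μ^m lie in the closed half-plane {η ∈ ℂ : Re η ≤ 1/2} for every μ > 0. For 1 ≤ m ≤ 5, all complex roots of P_μ^m lie in {Re η ≤ 1/2} if and only if 0 < μ ≤ μ_m, where μ_m is the unique positive root of q_m(μ) = P_μ^m(1/2). -/

import Mathlib

/-- The representative polynomial `P_μ^m` of type `IV₃` (complex variable). -/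
noncomputable def PIV3c (m : ℕ) (μ : ℝ) (η : ℂ) : ℂ :=
  (1 - (μ : ℂ)) * (2 - (μ : ℂ)) * (3 / 2 - (μ : ℂ)) +
    ((m : ℂ) + 1) * (μ : ℂ) * (1 - (μ : ℂ)) * (13 / 2 - 7 * (μ : ℂ)) * η +
    3 * ((m : ℂ) + 1) * ((m : ℂ) + 2) * (3 / 2 - 2 * (μ : ℂ)) * (μ : ℂ) ^ 2 * η ^ 2 +
    ((m : ℂ) + 1) * ((m : ℂ) + 2) * ((m : ℂ) + 3) * (μ : ℂ) ^ 3 * η ^ 3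

/-- The representative polynomial `P_μ^m` of type `IV₃` (real variable). -/
noncomputable def PIV3 (m : ℕ) (μ η : ℝ) : ℝ :=
  (1 - μ) * (2 - μ) * (3 / 2 - μ) +
    ((m : ℝ) + 1) * μ * (1 - μ) * (13 / 2 - 7 * μ) * η +
    3 * ((m : ℝ) + 1) * ((m : ℝ) + 2) * (3 / 2 - 2 * μ) * μ ^ 2 * η ^ 2 +
    ((m : ℝ) + 1) * ((m : ℝ) + 2) * ((m : ℝ) + 3) * μ ^ 3 * η ^ 3

/-- `q_m(μ) = P_μ^m(1/2)` for type `IV₃`. -/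
noncomputable def qIV3 (m : ℕ) (μ : ℝ) : ℝ := PIV3 m μ (1 / 2)

/-!
Substituting `η = z + 1/2` turns `P_μ^m` into a real cubic in `z` with positive leading
coefficient and constant term `q_m(μ)`. By the Routh–Hurwitz criterion for the closed left
half-plane (`a₃z³ + a₂z² + a₁z + a₀`, `a₃ > 0`, has all roots in `Re z ≤ 0` iff `a₂, a₁, a₀ ≥ 0`
and `a₃a₀ ≤ a₂a₁`; proved by splitting off a real root) the claim becomes a set of polynomial
inequalities in `μ`. For `m ≥ 6` they are polynomials in `μ` and `m - 6` with nonnegative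
coefficients. For `1 ≤ m ≤ 5` the coefficients of `q_m` change sign once, from `μ¹` (coefficient
`≥ 0`) to `μ³` (coefficient `≤ 0`), so `q_m(μ) / μ²` is strictly decreasing and `q_m(μ) ≥ 0`
exactly when `μ ≤ μ_m`; the bound on `μ` this gives keeps the remaining conditions true.
-/

open Complex

theorem re_nonpos_of_quadratic_eq_zero {s t : ℝ} (hs : 0 ≤ s) (ht : 0 ≤ t) {z : ℂ}
    (hz : z ^ 2 + s * z + t = 0) : z.re ≤ 0 := by
  have hre := congrArg re hz
  have him := congrArg im hz
  simp only [pow_two, add_re, add_im, mul_re, mul_im, ofReal_re, ofReal_im, zero_re,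
    zero_im] at hre him
  rcases eq_or_ne z.im 0 with hy | hy
  · nlinarith [mul_nonneg hs (sq_nonneg z.re)]
  · have : z.im * (2 * z.re + s) = 0 := by linarith
    linarith [(mul_eq_zero.1 this).resolve_left hy]

theorem quadratic_roots_re_nonpos_iff (s t : ℝ) :
    (∀ z : ℂ, z ^ 2 + s * z + t = 0 → z.re ≤ 0) ↔ 0 ≤ s ∧ 0 ≤ t := by
  refine ⟨fun H => ?_, fun ⟨hs, ht⟩ _ => re_nonpos_of_quadratic_eq_zero hs ht⟩
  rcases le_or_gt (s ^ 2) (4 * t) with hdisc | hdisc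
  · set v := √(t - s ^ 2 / 4)
    have hv : (v : ℂ) ^ 2 = t - s ^ 2 / 4 := by
      exact_mod_cast Real.sq_sqrt (by linarith)
    have hre : -s / 2 ≤ 0 := by
      simpa using H (-s / 2 + v * I) (by linear_combination (v : ℂ) ^ 2 * I_sq - hv)
    constructor <;> nlinarith
  · set u := √(s ^ 2 - 4 * t)
    have hu : u ^ 2 = s ^ 2 - 4 * t := Real.sq_sqrt (by linarith)
    have huC : (u : ℂ) ^ 2 = s ^ 2 - 4 * t := by exact_mod_cast hu
    have hre : (-s + u) / 2 ≤ 0 := by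
      simpa using H ((-s + u) / 2 : ℝ) (by push_cast; linear_combination huC / 4)
    have := Real.sqrt_nonneg (s ^ 2 - 4 * t)
    constructor <;> nlinarith

theorem exists_cubic_eq_zero (b c d : ℝ) : ∃ r : ℝ, r ^ 3 + b * r ^ 2 + c * r + d = 0 := by
  set M := 1 + |b| + |c| + |d|
  obtain ⟨hb, hb'⟩ := abs_le.1 (le_refl |b|)
  obtain ⟨hc, hc'⟩ := abs_le.1 (le_refl |c|)
  obtain ⟨hd, hd'⟩ := abs_le.1 (le_refl |d|)
  have hM : 1 ≤ M := by linarith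
  have hM2 : M ≤ M ^ 2 := by nlinarith
  have hcont : ContinuousOn (fun x : ℝ => x ^ 3 + b * x ^ 2 + c * x + d) (Set.Icc (-M) M) := by
    fun_prop
  obtain ⟨r, -, hr⟩ := intermediate_value_Icc (by linarith) hcont
    (show (0 : ℝ) ∈ Set.Icc _ _ from ⟨by nlinarith, by nlinarith⟩)
  exact ⟨r, hr⟩

theorem cubic_roots_re_nonpos_iff_of_monic (b c d : ℝ) :
    (∀ z : ℂ, z ^ 3 + b * z ^ 2 + c * z + d = 0 → z.re ≤ 0) ↔
      0 ≤ b ∧ 0 ≤ c ∧ 0 ≤ d ∧ d ≤ b * c := by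
  obtain ⟨r, hr⟩ := exists_cubic_eq_zero b c d
  obtain ⟨s, t, rfl, rfl, rfl⟩ : ∃ s t, b = s - r ∧ c = t - r * s ∧ d = -(r * t) :=
    ⟨b + r, c + r * (b + r), by ring, by ring, by linear_combination hr⟩
  clear hr
  have hroots : (∀ z : ℂ, z ^ 3 + ((s - r : ℝ) : ℂ) * z ^ 2 + ((t - r * s : ℝ) : ℂ) * z
      + ((-(r * t) : ℝ) : ℂ) = 0 → z.re ≤ 0) ↔
      r ≤ 0 ∧ ∀ z : ℂ, z ^ 2 + s * z + t = 0 → z.re ≤ 0 := by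
    have hfac (z : ℂ) : z ^ 3 + ((s - r : ℝ) : ℂ) * z ^ 2 + ((t - r * s : ℝ) : ℂ) * z
        + ((-(r * t) : ℝ) : ℂ) = (z - r) * (z ^ 2 + s * z + t) := by push_cast; ring
    simp only [hfac, mul_eq_zero, sub_eq_zero, or_imp, forall_and, forall_eq, ofReal_re]
  have hdet : (s - r) * (t - r * s) - -(r * t) = s * (t - r * s + r ^ 2) := by ring
  rw [hroots, quadratic_roots_re_nonpos_iff]
  constructor
  · rintro ⟨hr, hs, ht⟩
    refine ⟨by linarith, by nlinarith, by nlinarith, ?_⟩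
    have hb : 0 ≤ s - r := by linarith
    nlinarith [mul_nonneg hs (add_nonneg ht (mul_nonneg (neg_nonneg.2 hr) hb))]
  · rintro ⟨hb, hc, hd, hbc⟩
    have hr : r ≤ 0 := by
      by_contra! hr
      have : t ≤ 0 := by nlinarith
      nlinarith
    have ht : 0 ≤ t := by nlinarith
    refine ⟨hr, ?_, ht⟩
    by_contra! hs
    have : t - r * s + r ^ 2 ≤ 0 := by nlinarith
    have : r = 0 := by nlinarith
    linarith

theorem cubic_roots_re_nonpos_iff {a₃ : ℝ} (ha₃ : 0 < a₃) (a₂ a₁ a₀ : ℝ) :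
    (∀ z : ℂ, a₃ * z ^ 3 + a₂ * z ^ 2 + a₁ * z + a₀ = 0 → z.re ≤ 0) ↔
      0 ≤ a₂ ∧ 0 ≤ a₁ ∧ 0 ≤ a₀ ∧ a₃ * a₀ ≤ a₂ * a₁ := by
  have hmonic (z : ℂ) : a₃ * z ^ 3 + a₂ * z ^ 2 + a₁ * z + a₀ =
      a₃ * (z ^ 3 + ((a₂ / a₃ : ℝ) : ℂ) * z ^ 2 + ((a₁ / a₃ : ℝ) : ℂ) * z + ((a₀ / a₃ : ℝ) : ℂ)) := by
    have : (a₃ : ℂ) ≠ 0 := by exact_mod_cast ha₃.ne'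
    push_cast; field_simp
  simp only [hmonic, mul_eq_zero, ofReal_eq_zero, ha₃.ne', false_or,
    cubic_roots_re_nonpos_iff_of_monic, le_div_iff₀ ha₃, zero_mul]
  rw [div_mul_div_comm, ← div_div, div_le_div_iff_of_pos_right ha₃, le_div_iff₀ ha₃, mul_comm]

theorem cubic_nonneg_iff_le_of_eq_zero {c₀ c₁ c₃ : ℝ} (c₂ : ℝ) (hc₀ : 0 < c₀) (hc₁ : 0 ≤ c₁)
    (hc₃ : c₃ ≤ 0) {x y : ℝ} (hx : 0 < x) (hy : 0 < y)
    (hy₀ : c₀ + c₁ * y + c₂ * y ^ 2 + c₃ * y ^ 3 = 0) :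
    0 ≤ c₀ + c₁ * x + c₂ * x ^ 2 + c₃ * x ^ 3 ↔ x ≤ y := by
  have hK : 0 < c₀ * (x + y) + c₁ * x * y - c₃ * x ^ 2 * y ^ 2 := by
    have := mul_nonneg (mul_nonneg hc₁ hx.le) hy.le
    have := mul_nonneg (mul_nonneg (neg_nonneg.2 hc₃) (sq_nonneg x)) (sq_nonneg y)
    nlinarith [mul_pos hc₀ (add_pos hx hy)]
  have key : y ^ 2 * (c₀ + c₁ * x + c₂ * x ^ 2 + c₃ * x ^ 3) =
      (y - x) * (c₀ * (x + y) + c₁ * x * y - c₃ * x ^ 2 * y ^ 2) := by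
    linear_combination x ^ 2 * hy₀
  rw [← mul_nonneg_iff_of_pos_left (pow_pos hy 2), key, mul_nonneg_iff_of_pos_right hK, sub_nonneg]

-- `P_μ^m(z + 1/2) = shiftedCoeff3 z³ + shiftedCoeff2 z² + shiftedCoeff1 z + q_m(μ)`
noncomputable def shiftedCoeff3 (m : ℕ) (μ : ℝ) : ℝ :=
  ((m : ℝ) + 1) * ((m : ℝ) + 2) * ((m : ℝ) + 3) * μ ^ 3

noncomputable def shiftedCoeff2 (m : ℕ) (μ : ℝ) : ℝ :=
  3 / 2 * ((m : ℝ) + 1) * ((m : ℝ) + 2) * μ ^ 2 * (3 + ((m : ℝ) - 1) * μ)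

noncomputable def shiftedCoeff1 (m : ℕ) (μ : ℝ) : ℝ :=
  ((m : ℝ) + 1) * μ * (13 / 2 + 9 / 2 * ((m : ℝ) - 1) * μ
    + (3 * (m : ℝ) ^ 2 - 9 * (m : ℝ) - 2) / 4 * μ ^ 2)

-- `shiftedCoeff2 * shiftedCoeff1 - shiftedCoeff3 * q_m = (m + 1)(m + 2)μ³/8 * hurwitzFactor`
noncomputable def hurwitzFactor (m : ℕ) (μ : ℝ) : ℝ :=
  6 * (35 * (m : ℝ) + 27) + 2 * (107 * (m : ℝ) ^ 2 - 26 * (m : ℝ) - 81) * μ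
    + 36 * (2 * (m : ℝ) ^ 3 - 3 * (m : ℝ) ^ 2 - 2 * (m : ℝ) + 1) * μ ^ 2
    + 8 * (m : ℝ) * ((m : ℝ) - 1) * ((m : ℝ) ^ 2 - 2 * (m : ℝ) - 2) * μ ^ 3

theorem qIV3_eq (m : ℕ) (μ : ℝ) : qIV3 m μ = 3 + 13 / 4 * ((m : ℝ) - 1) * μ
    + 9 / 8 * (m : ℝ) * ((m : ℝ) - 3) * μ ^ 2
    + ((m : ℝ) ^ 3 - 6 * (m : ℝ) ^ 2 + 3 * (m : ℝ) + 2) / 8 * μ ^ 3 := by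
  simp only [qIV3, PIV3]; ring

theorem PIV3c_add_half (m : ℕ) (μ : ℝ) (z : ℂ) :
    PIV3c m μ (z + 1 / 2) = shiftedCoeff3 m μ * z ^ 3 + shiftedCoeff2 m μ * z ^ 2
      + shiftedCoeff1 m μ * z + qIV3 m μ := by
  simp only [PIV3c, shiftedCoeff3, shiftedCoeff2, shiftedCoeff1, qIV3, PIV3]
  push_cast
  ring

theorem shiftedCoeff3_pos (m : ℕ) {μ : ℝ} (hμ : 0 < μ) : 0 < shiftedCoeff3 m μ := by
  unfold shiftedCoeff3; positivity

theorem shiftedCoeff_hurwitz_iff (m : ℕ) {μ : ℝ} (hμ : 0 < μ) :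
    shiftedCoeff3 m μ * qIV3 m μ ≤ shiftedCoeff2 m μ * shiftedCoeff1 m μ ↔
      0 ≤ hurwitzFactor m μ := by
  have key : shiftedCoeff2 m μ * shiftedCoeff1 m μ - shiftedCoeff3 m μ * qIV3 m μ =
      ((m : ℝ) + 1) * ((m : ℝ) + 2) * μ ^ 3 / 8 * hurwitzFactor m μ := by
    rw [qIV3_eq]; simp only [shiftedCoeff3, shiftedCoeff2, shiftedCoeff1, hurwitzFactor]; ring
  rw [← sub_nonneg, key, mul_nonneg_iff_of_pos_left (by positivity)]

theorem PIV3c_roots_re_le_half_iff (m : ℕ) {μ : ℝ} (hμ : 0 < μ) :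
    (∀ η : ℂ, PIV3c m μ η = 0 → η.re ≤ 1 / 2) ↔
      0 ≤ shiftedCoeff2 m μ ∧ 0 ≤ shiftedCoeff1 m μ ∧ 0 ≤ qIV3 m μ ∧ 0 ≤ hurwitzFactor m μ := by
  rw [← shiftedCoeff_hurwitz_iff m hμ, ← cubic_roots_re_nonpos_iff (shiftedCoeff3_pos m hμ),
    (Equiv.subRight (1 / 2 : ℂ)).forall_congr_left]
  refine forall_congr' fun z => ?_
  rw [Equiv.subRight_symm_apply, PIV3c_add_half, add_re]
  norm_num

theorem hurwitz_conditions_of_six_le {m : ℕ} (hm : 6 ≤ m) {μ : ℝ} (hμ : 0 ≤ μ) :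
    0 ≤ shiftedCoeff2 m μ ∧ 0 ≤ shiftedCoeff1 m μ ∧ 0 ≤ qIV3 m μ ∧ 0 ≤ hurwitzFactor m μ := by
  obtain ⟨n, rfl⟩ := Nat.exists_eq_add_of_le' hm
  rw [qIV3_eq]
  simp only [shiftedCoeff2, shiftedCoeff1, hurwitzFactor]
  push_cast
  ring_nf
  exact ⟨by positivity, by positivity, by positivity, by positivity⟩

theorem qIV3_nonneg_iff_le {m : ℕ} (hm₁ : 1 ≤ m) (hm₅ : m ≤ 5) {μ μm : ℝ} (hμ : 0 < μ)
    (hμm : 0 < μm) (hq : qIV3 m μm = 0) : 0 ≤ qIV3 m μ ↔ μ ≤ μm := by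
  have hm : (1 : ℝ) ≤ m := by exact_mod_cast hm₁
  have hm' : (m : ℝ) ≤ 5 := by exact_mod_cast hm₅
  rw [qIV3_eq] at hq ⊢
  refine cubic_nonneg_iff_le_of_eq_zero _ (by norm_num) (by nlinarith) ?_ hμ hμm hq
  -- `m³ - 6m² + 3m + 2 = -(m - 1) m (5 - m) - 2(m - 1)`
  nlinarith [mul_nonneg (sub_nonneg.2 hm) (mul_nonneg (by linarith : 0 ≤ (m : ℝ)) (sub_nonneg.2 hm'))]

theorem hurwitz_conditions_of_qIV3_nonneg {m : ℕ} (hm₁ : 1 ≤ m) (hm₅ : m ≤ 5) {μ : ℝ}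
    (hμ : 0 < μ) (hq : 0 ≤ qIV3 m μ) :
    0 ≤ shiftedCoeff2 m μ ∧ 0 ≤ shiftedCoeff1 m μ ∧ 0 ≤ hurwitzFactor m μ := by
  rw [qIV3_eq] at hq
  simp only [shiftedCoeff2, shiftedCoeff1, hurwitzFactor]
  interval_cases m <;> norm_num at hq ⊢ <;> refine ⟨by positivity, ?_, ?_⟩ <;>
    first | positivity | nlinarith [mul_pos hμ hμ]

/-- Localization of the roots of `P_μ^m` for type `IV₃`: for `m ≥ 6` all roots
lie in `{Re η ≤ 1/2}` for every `μ > 0`; for `1 ≤ m ≤ 5` this holds iff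
`0 < μ ≤ μ_m`, `μ_m` being the unique positive root of `q_m`. -/
theorem PIV3_roots_localization :
    (∀ m : ℕ, 6 ≤ m → ∀ μ : ℝ, 0 < μ →
      ∀ η : ℂ, PIV3c m μ η = 0 → η.re ≤ 1 / 2) ∧
    (∀ m : ℕ, 1 ≤ m → m ≤ 5 → ∀ μm : ℝ, 0 < μm → qIV3 m μm = 0 →
      ∀ μ : ℝ, 0 < μ →
        ((∀ η : ℂ, PIV3c m μ η = 0 → η.re ≤ 1 / 2) ↔ μ ≤ μm)) := by
  refine ⟨fun m hm μ hμ =>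
    (PIV3c_roots_re_le_half_iff m hμ).2 (hurwitz_conditions_of_six_le hm hμ.le), ?_⟩
  intro m hm₁ hm₅ μm hμm hqm μ hμ
  rw [PIV3c_roots_re_le_half_iff m hμ, ← qIV3_nonneg_iff_le hm₁ hm₅ hμ hμm hqm]
  refine ⟨fun h => h.2.2.1, fun hq => ?_⟩
  obtain ⟨h₂, h₁, hH⟩ := hurwitz_conditions_of_qIV3_nonneg hm₁ hm₅ hμ hq
  exact ⟨h₂, h₁, hq, hH⟩
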